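/- (Brandt, the class number is an invariant of the algebra) Let a, b be nonzero rationals and A = ℍ[ℚ, a, b]. For any two maximal orders O and O′ of A, the set of equivalence classes of left O-ideals and the set of equivalence classes of left O′-ideals are in bijection; in particular all maximal orders of A have the same class number, so one may speak of the class number h of the algebra A. -/

import Mathlib

open scoped Quaternion

/-- An order in the quaternion algebra `ℍ[ℚ, a, b]`: a subring (hence containing `1`)
which is finitely generated as a ℤ-module and contains a ℚ-basis of the algebra
(i.e. spans it over ℚ). -/
def IsOrder {a b : ℚ} (O : Subring ℍ[ℚ, a, b]) : Prop :=
  (∃ s : Finset ℍ[ℚ, a, b],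
      (Submodule.span ℤ (s : Set ℍ[ℚ, a, b]) : Set ℍ[ℚ, a, b]) = (O : Set ℍ[ℚ, a, b])) ∧
    Submodule.span ℚ (O : Set ℍ[ℚ, a, b]) = ⊤

/-- A maximal order: an order maximal under inclusion. -/
def IsMaximalOrder {a b : ℚ} (O : Subring ℍ[ℚ, a, b]) : Prop :=
  IsOrder O ∧ ∀ O' : Subring ℍ[ℚ, a, b], IsOrder O' → O ≤ O' → O' = O

/-- Two orders are conjugate (of the same type) if `O' = γ⁻¹·O·γ` for some
invertible (equivalently, of nonzero reduced norm) `γ` in the algebra. -/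
def AreConjugate {a b : ℚ} (O O' : Subring ℍ[ℚ, a, b]) : Prop :=
  ∃ γ : ℍ[ℚ, a, b]ˣ,
    ∀ x, x ∈ O' ↔ ∃ y ∈ O, x = (↑γ⁻¹ : ℍ[ℚ, a, b]) * y * (↑γ : ℍ[ℚ, a, b])

/-- A left `O`-ideal: a ℤ-submodule of the algebra, finitely generated as a ℤ-module,
containing a ℚ-basis of the algebra, and stable under left multiplication by `O`. -/
def IsLeftIdeal {a b : ℚ} (O : Subring ℍ[ℚ, a, b]) (I : Submodule ℤ ℍ[ℚ, a, b]) : Prop :=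
  I.FG ∧ Submodule.span ℚ (I : Set ℍ[ℚ, a, b]) = ⊤ ∧ ∀ o ∈ O, ∀ x ∈ I, o * x ∈ I

/-- Equivalence of left ideals: `I = J·γ` for some nonzero `γ`. -/
def IdealEquiv {a b : ℚ} (I J : Submodule ℤ ℍ[ℚ, a, b]) : Prop :=
  ∃ γ : ℍ[ℚ, a, b], γ ≠ 0 ∧ (I : Set ℍ[ℚ, a, b]) = (fun y => y * γ) '' (J : Set ℍ[ℚ, a, b])

/-!
If `O` is a maximal order and `u` has integral reduced norm with `trd (o * u) ∈ ℤ` for all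
`o ∈ O`, then `u ∈ O`: the identity `u o u = trd (o u) u - nrd u • star o` shows that `O + O u O`
is an order containing `O`. The reduced norms of the connecting ideal `J = O O'` generate a
lattice `q ℤ` with `q ≠ 0`, and for `x, y ∈ J` the element `q⁻¹ x ȳ` passes this test; hence
`J J̄ = q O` and `J̄ J = q O'`. So `I ↦ J̄ I` and `K ↦ J K` are mutually inverse on ideal classes,
since multiplying by `q` does not change the class.
-/
open scoped Pointwise

theorem IsIntegral.star {A : Type*} [Ring A] [StarRing A] {x : A} (hx : IsIntegral ℤ x) :
    IsIntegral ℤ (star x) := by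
  obtain ⟨p, hp, hpx⟩ := hx.map (starRingEquiv : A ≃+* Aᵐᵒᵖ).toRingHom.toIntAlgHom
  refine ⟨p, hp, MulOpposite.op_injective ?_⟩
  rw [← Polynomial.aeval_def] at hpx ⊢
  rw [← Polynomial.aeval_op_apply]
  simpa using hpx

open scoped IsMulCommutative in
theorem Commute.isIntegral_add {R A : Type*} [CommRing R] [Ring A] [Algebra R A] {x y : A}
    (hxy : Commute x y) (hx : IsIntegral R x) (hy : IsIntegral R y) : IsIntegral R (x + y) := by
  let S := Algebra.adjoin R {x, y}
  have : IsMulCommutative S := Algebra.isMulCommutative_adjoin R <| by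
    rintro a (rfl | rfl) b (rfl | rfl) <;> first | rfl | exact hxy | exact hxy.symm
  have hS (z : S) := isIntegral_algHom_iff S.val (x := z) Subtype.val_injective
  let x' : S := ⟨x, Algebra.subset_adjoin (by simp)⟩
  let y' : S := ⟨y, Algebra.subset_adjoin (by simp)⟩
  exact (hS (x' + y')).2 (((hS x').1 hx).add ((hS y').1 hy))

theorem Submodule.IsPrincipal.of_fg_of_isFractionRing {R K : Type*} [CommRing R] [IsDomain R]
    [IsPrincipalIdealRing R] [Field K] [Algebra R K] [IsFractionRing R K] {Q : Submodule R K}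
    (hQ : Q.FG) : Q.IsPrincipal :=
  FractionalIdeal.isPrincipal ⟨Q, FractionalIdeal.isFractional_of_fg hQ⟩

theorem IdemSemiring.add_mul_mul_mul_self_le {α : Type*} [IdemSemiring α] {M U : α}
    (hM : M * M = M) (hU : U * M * U ≤ U + M) :
    (M + M * U * M) * (M + M * U * M) ≤ M + M * U * M := by
  have hMUM : M * U * M * (M * U * M) ≤ M + M * U * M := calc
    M * U * M * (M * U * M) = M * (U * M * U) * M := by simp only [mul_assoc, hM, ← mul_assoc M M]
    _ ≤ M * (U + M) * M := by gcongr
    _ = M + M * U * M := by simp only [mul_add, add_mul, hM, add_comm]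
  have hM' : M * (M * U * M) = M * U * M := by simp only [← mul_assoc, hM]
  have hM'' : M * U * M * M = M * U * M := by simp only [mul_assoc, hM]
  rw [add_mul, mul_add, mul_add, hM, hM', hM'']
  exact add_le_iff.2 ⟨le_rfl, add_le_iff.2 ⟨le_add_self, hMUM⟩⟩

def Quot.equivOfInverseRel {α β : Sort*} {r : α → α → Prop} {s : β → β → Prop} (f : α → β)
    (g : β → α) (hf : ∀ a a', r a a' → s (f a) (f a')) (hg : ∀ b b', s b b' → r (g b) (g b'))
    (hgf : ∀ a, r (g (f a)) a) (hfg : ∀ b, s (f (g b)) b) : Quot r ≃ Quot s where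
  toFun := Quot.map f hf
  invFun := Quot.map g hg
  left_inv := Quot.ind fun a => Quot.sound (hgf a)
  right_inv := Quot.ind fun b => Quot.sound (hfg b)

def Subring.toIntSubmodule {A : Type*} [Ring A] (O : Subring A) : Submodule ℤ A :=
  Subalgebra.toSubmodule (subalgebraOfSubring O)

theorem Subring.toIntSubmodule_mul_self {A : Type*} [Ring A] (O : Subring A) :
    O.toIntSubmodule * O.toIntSubmodule = O.toIntSubmodule :=
  (subalgebraOfSubring O).isIdempotentElem_toSubmodule

namespace Submodule

variable {A : Type*} [Ring A] [StarRing A]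

def conj (J : Submodule ℤ A) : Submodule ℤ A :=
  J.comap (starAddEquiv : A ≃+ A).toIntLinearEquiv.toLinearMap

@[simp] theorem mem_conj {J : Submodule ℤ A} {x : A} : x ∈ J.conj ↔ star x ∈ J := Iff.rfl

theorem conj_conj (J : Submodule ℤ A) : J.conj.conj = J := by ext; simp

theorem conj_mono {X Y : Submodule ℤ A} (h : X ≤ Y) : X.conj ≤ Y.conj := comap_mono h

theorem conj_mul_le (X Y : Submodule ℤ A) : Y.conj * X.conj ≤ (X * Y).conj :=
  mul_le.2 fun y hy x hx => by
    rw [mem_conj, star_mul]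
    exact mul_mem_mul hx hy

theorem conj_mul (X Y : Submodule ℤ A) : (X * Y).conj = Y.conj * X.conj := by
  refine le_antisymm ?_ (conj_mul_le X Y)
  simpa only [conj_conj] using conj_mono (conj_mul_le Y.conj X.conj)

end Submodule

namespace QuaternionAlgebra

open Submodule

variable {R : Type*} [CommRing R] {c₁ c₂ c₃ : R}

def nrd : ℍ[R,c₁,c₂,c₃] →*₀ R where
  toFun x := (x * star x).re
  map_zero' := by simp
  map_one' := by simp
  map_mul' x y := coe_injective <| by
    rw [coe_mul, ← mul_star_eq_coe, ← mul_star_eq_coe, ← mul_star_eq_coe, star_mul, mul_assoc,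
      ← mul_assoc y, mul_star_eq_coe y, comm, ← mul_assoc]

def trd : ℍ[R,c₁,c₂,c₃] →ₗ[R] R where
  toFun x := (x + star x).re
  map_add' x y := by simp only [star_add, re_add]; ring
  map_smul' r x := by simp [mul_add]

variable (x y : ℍ[R,c₁,c₂,c₃])

theorem coe_nrd : ((nrd x : R) : ℍ[R,c₁,c₂,c₃]) = x * star x := (mul_star_eq_coe x).symm

theorem coe_trd : ((trd x : R) : ℍ[R,c₁,c₂,c₃]) = x + star x :=
  (eq_re_of_eq_coe (self_add_star' x)).symm

theorem star_eq_trd_sub : star x = (trd x : R) - x := eq_sub_of_add_eq' (coe_trd x).symm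

@[simp] theorem nrd_star : nrd (star x) = nrd x := by simp [nrd]; ring

theorem nrd_smul (r : R) : nrd (r • x) = r ^ 2 * nrd x := by simp [nrd]; ring

theorem nrd_add : nrd (x + y) = nrd x + nrd y + trd (x * star y) := by simp [nrd, trd]; ring

theorem mul_mul_self_eq (u o : ℍ[R,c₁,c₂,c₃]) : u * o * u = trd (o * u) • u - nrd u • star o := by
  rw [← coe_mul_eq_smul, ← coe_mul_eq_smul, comm (trd _), coe_trd, coe_nrd, star_mul]
  noncomm_ring

theorem fg_span_nrd_image {J : Submodule ℤ ℍ[R,c₁,c₂,c₃]} (hJ : J.FG) :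
    (span ℤ (nrd '' (J : Set ℍ[R,c₁,c₂,c₃]))).FG := by
  obtain ⟨s, rfl⟩ := hJ
  let polar : ℍ[R,c₁,c₂,c₃] →ₗ[ℤ] ℍ[R,c₁,c₂,c₃] →ₗ[ℤ] R :=
    ((LinearMap.mul ℤ _).compl₂ (starAddEquiv : ℍ[R,c₁,c₂,c₃] ≃+ _).toIntLinearEquiv.toLinearMap)
      |>.compr₂ trd.toAddMonoidHom.toIntLinearMap
  have hs : (span ℤ (s : Set ℍ[R,c₁,c₂,c₃])).FG := ⟨s, rfl⟩
  refine ((fg_span (s.finite_toSet.image nrd)).sup (hs.map₂ polar hs)).of_le (span_le.2 ?_)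
  rintro _ ⟨x, hx, rfl⟩
  induction hx using span_induction with
  | mem x hx => exact mem_sup_left (subset_span ⟨x, hx, rfl⟩)
  | zero => simp
  | add x y hx hy hnx hny =>
    rw [nrd_add]
    exact add_mem (add_mem hnx hny) (mem_sup_right (apply_mem_map₂ polar hx hy))
  | smul n x _ hnx =>
    rw [← Int.cast_smul_eq_zsmul R, nrd_smul, ← Int.cast_pow, ← zsmul_eq_mul]
    exact smul_mem _ _ hnx

theorem nrd_image_conj (J : Submodule ℤ ℍ[R,c₁,c₂,c₃]) :
    nrd '' (J.conj : Set ℍ[R,c₁,c₂,c₃]) = nrd '' (J : Set ℍ[R,c₁,c₂,c₃]) := by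
  ext r
  constructor
  · rintro ⟨x, hx, rfl⟩
    exact ⟨star x, hx, nrd_star x⟩
  · rintro ⟨x, hx, rfl⟩
    exact ⟨star x, by simpa using hx, nrd_star x⟩

theorem coe_mem_mul_conj {J : Submodule ℤ ℍ[R,c₁,c₂,c₃]} {r : R}
    (hr : r ∈ span ℤ (nrd '' (J : Set ℍ[R,c₁,c₂,c₃]))) :
    (r : ℍ[R,c₁,c₂,c₃]) ∈ J * J.conj := by
  have h : (span ℤ (nrd '' (J : Set ℍ[R,c₁,c₂,c₃]))).map
      ((Algebra.linearMap R ℍ[R,c₁,c₂,c₃]).restrictScalars ℤ) ≤ J * J.conj := by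
    rw [map_span, span_le]
    rintro _ ⟨_, ⟨x, hx, rfl⟩, rfl⟩
    simpa [coe_nrd] using mul_mem_mul hx (show star x ∈ J.conj by simpa using hx)
  simpa using h (mem_map_of_mem hr)

theorem exists_span_nrd_image_eq {c₁ c₂ c₃ : ℚ} {J : Submodule ℤ ℍ[ℚ,c₁,c₂,c₃]} (hJ : J.FG)
    (h1 : 1 ∈ J) :
    ∃ q : ℚ, q ≠ 0 ∧ span ℤ (nrd '' (J : Set ℍ[ℚ,c₁,c₂,c₃])) = span ℤ {q} := by
  obtain ⟨q, hq⟩ := (IsPrincipal.of_fg_of_isFractionRing (fg_span_nrd_image hJ)).principal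
  refine ⟨q, ?_, hq⟩
  rintro rfl
  have h : nrd (1 : ℍ[ℚ,c₁,c₂,c₃]) ∈ span ℤ (nrd '' (J : Set ℍ[ℚ,c₁,c₂,c₃])) :=
    subset_span ⟨1, h1, rfl⟩
  rw [hq, span_singleton_eq_bot.2 rfl, map_one, mem_bot] at h
  exact one_ne_zero h

end QuaternionAlgebra

section Quaternion

open QuaternionAlgebra Submodule

variable {a b : ℚ}

namespace IsOrder

variable {O : Subring ℍ[ℚ, a, b]}

theorem fg (hO : IsOrder O) : O.toIntSubmodule.FG :=
  let ⟨s, hs⟩ := hO.1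
  ⟨s, SetLike.coe_injective hs⟩

theorem of_le {Λ : Subring ℍ[ℚ, a, b]} (hO : IsOrder O) (hle : O ≤ Λ)
    (hΛ : Λ.toIntSubmodule.FG) : IsOrder Λ :=
  let ⟨s, hs⟩ := hΛ
  ⟨⟨s, congrArg SetLike.coe hs⟩, top_le_iff.1 (hO.2 ▸ span_mono hle)⟩

theorem isIntegral (hO : IsOrder O) {x : ℍ[ℚ, a, b]} (hx : x ∈ O) : IsIntegral ℤ x :=
  .of_mem_of_fg (subalgebraOfSubring O) hO.fg x hx

theorem exists_trd_eq_intCast (hO : IsOrder O) {x : ℍ[ℚ, a, b]} (hx : x ∈ O) :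
    ∃ n : ℤ, trd x = n := by
  have h := Commute.isIntegral_add (star_comm_self' x).symm (hO.isIntegral hx)
    (hO.isIntegral hx).star
  rw [← coe_trd, ← coe_algebraMap, isIntegral_algebraMap_iff (algebraMap ℚ _).injective] at h
  obtain ⟨n, hn⟩ := IsIntegrallyClosed.isIntegral_iff.1 h
  exact ⟨n, hn.symm⟩

theorem star_mem (hO : IsOrder O) {x : ℍ[ℚ, a, b]} (hx : x ∈ O) : star x ∈ O := by
  obtain ⟨n, hn⟩ := hO.exists_trd_eq_intCast hx
  rw [star_eq_trd_sub, hn, coe_intCast]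
  exact sub_mem (intCast_mem O n) hx

theorem conj_toIntSubmodule (hO : IsOrder O) : O.toIntSubmodule.conj = O.toIntSubmodule :=
  le_antisymm (fun x hx => star_star x ▸ hO.star_mem hx) fun _ hx => hO.star_mem hx

theorem span_singleton_mul_mul_le (hO : IsOrder O) {u : ℍ[ℚ, a, b]} (hn : ∃ n : ℤ, nrd u = n)
    (ht : ∀ o ∈ O, ∃ t : ℤ, trd (o * u) = t) :
    span ℤ {u} * O.toIntSubmodule * span ℤ {u} ≤ span ℤ {u} + O.toIntSubmodule :=
  mul_le.2 fun w hw v hv => by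
    obtain ⟨o, ho, rfl⟩ := mem_span_singleton_mul.1 hw
    obtain ⟨k, rfl⟩ := mem_span_singleton.1 hv
    obtain ⟨n, hn⟩ := hn
    obtain ⟨t, ht⟩ := ht o ho
    rw [mul_smul_comm, mul_mul_self_eq, ht, hn, Int.cast_smul_eq_zsmul, Int.cast_smul_eq_zsmul]
    exact smul_mem _ k (sub_mem (mem_sup_left (smul_mem _ t (mem_span_singleton_self u)))
      (mem_sup_right (smul_mem _ n (hO.star_mem ho))))

end IsOrder

theorem IsMaximalOrder.mem_of_nrd_trd {O : Subring ℍ[ℚ, a, b]} (hO : IsMaximalOrder O)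
    {u : ℍ[ℚ, a, b]} (hn : ∃ n : ℤ, nrd u = n) (ht : ∀ o ∈ O, ∃ t : ℤ, trd (o * u) = t) :
    u ∈ O := by
  set M := O.toIntSubmodule
  set Λ := M + M * span ℤ {u} * M
  have hmul : Λ * Λ ≤ Λ := IdemSemiring.add_mul_mul_mul_self_le O.toIntSubmodule_mul_self
    (hO.1.span_singleton_mul_mul_le hn ht)
  let Λs : Subring ℍ[ℚ, a, b] := (Λ.toSubalgebra (mem_sup_left (one_mem O))
    fun _ _ hx hy => hmul (mul_mem_mul hx hy)).toSubring
  have hOΛ : O ≤ Λs := fun _ hx => mem_sup_left hx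
  have hΛ : Λs = O := hO.2 Λs (hO.1.of_le hOΛ
    (hO.1.fg.sup ((hO.1.fg.mul (fg_span_singleton u)).mul hO.1.fg))) hOΛ
  rw [← hΛ]
  refine mem_sup_right ?_
  have h1 : (1 : ℍ[ℚ, a, b]) ∈ M := one_mem O
  simpa using mul_mem_mul (mul_mem_mul h1 (mem_span_singleton_self u)) h1

theorem IsMaximalOrder.mul_conj_eq_smul {O : Subring ℍ[ℚ, a, b]} (hO : IsMaximalOrder O)
    {J : Submodule ℤ ℍ[ℚ, a, b]} (hJ : O.toIntSubmodule * J ≤ J) {q : ℚ} (hq0 : q ≠ 0)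
    (hq : span ℤ (nrd '' (J : Set ℍ[ℚ, a, b])) = span ℤ {q}) :
    J * J.conj = q • O.toIntSubmodule := by
  have hnrd : ∀ x ∈ J, ∃ n : ℤ, nrd x = n * q := fun x hx => by
    have h : nrd x ∈ span ℤ {q} := hq ▸ subset_span ⟨x, hx, rfl⟩
    obtain ⟨n, hn⟩ := mem_span_singleton.1 h
    exact ⟨n, by rw [← hn, zsmul_eq_mul]⟩
  have hdiv : ∀ x ∈ J, ∀ y ∈ J, q⁻¹ • (x * star y) ∈ O := fun x hx y hy => by
    obtain ⟨m, hm⟩ := hnrd x hx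
    obtain ⟨n, hn⟩ := hnrd y hy
    refine hO.mem_of_nrd_trd ⟨m * n, ?_⟩ fun o ho => ?_
    · rw [nrd_smul, map_mul, nrd_star, hm, hn]
      field_simp
      push_cast
      ring
    · have hox : o * x ∈ J := hJ (mul_mem_mul ho hx)
      obtain ⟨l, hl⟩ := hnrd _ (add_mem hox hy)
      obtain ⟨k, hk⟩ := hnrd _ hox
      refine ⟨l - k - n, ?_⟩
      have htrd := nrd_add (o * x) y
      rw [mul_smul_comm, map_smul, ← mul_assoc, smul_eq_mul]
      rw [hl, hk, hn] at htrd
      field_simp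
      push_cast
      linarith
  have hJO : J.conj * O.toIntSubmodule ≤ J.conj := by
    simpa only [Submodule.conj_mul, hO.1.conj_toIntSubmodule] using conj_mono hJ
  refine le_antisymm (mul_le.2 fun x hx y hy => ?_) ?_
  · have h : x * y = q • (q⁻¹ • (x * star (star y))) := by rw [star_star, smul_inv_smul₀ hq0]
    rw [h]
    exact smul_mem_pointwise_smul _ _ _ (hdiv x hx _ hy)
  · rw [pointwise_smul_def, map_le_iff_le_comap]
    intro m hm
    have hqJ : (q : ℍ[ℚ, a, b]) ∈ J * J.conj :=
      coe_mem_mul_conj (hq ▸ mem_span_singleton_self q)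
    show q • m ∈ J * J.conj
    have hle : J * J.conj * O.toIntSubmodule ≤ J * J.conj := by
      rw [mul_assoc]
      exact mul_le_mul' le_rfl hJO
    rw [← coe_mul_eq_smul]
    exact hle (mul_mem_mul hqJ hm)

def connectingIdeal (O O' : Subring ℍ[ℚ, a, b]) : Submodule ℤ ℍ[ℚ, a, b] :=
  O.toIntSubmodule * O'.toIntSubmodule

theorem one_mem_connectingIdeal (O O' : Subring ℍ[ℚ, a, b]) : 1 ∈ connectingIdeal O O' :=
  one_mul (1 : ℍ[ℚ, a, b]) ▸ mul_mem_mul (one_mem O) (one_mem O')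

theorem toIntSubmodule_mul_connectingIdeal (O O' : Subring ℍ[ℚ, a, b]) :
    O.toIntSubmodule * connectingIdeal O O' = connectingIdeal O O' := by
  rw [connectingIdeal, ← mul_assoc, O.toIntSubmodule_mul_self]

section connectingIdeal

variable {O O' : Subring ℍ[ℚ, a, b]}

theorem IsOrder.fg_connectingIdeal (hO : IsOrder O) (hO' : IsOrder O') :
    (connectingIdeal O O').FG :=
  hO.fg.mul hO'.fg

theorem IsOrder.conj_connectingIdeal (hO : IsOrder O) (hO' : IsOrder O') :
    (connectingIdeal O O').conj = connectingIdeal O' O := by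
  rw [connectingIdeal, Submodule.conj_mul, hO.conj_toIntSubmodule, hO'.conj_toIntSubmodule,
    connectingIdeal]

theorem IsMaximalOrder.exists_connectingIdeal_mul_eq_smul (hO : IsMaximalOrder O)
    (hO' : IsMaximalOrder O') : ∃ q : ℚ, q ≠ 0 ∧
      connectingIdeal O O' * connectingIdeal O' O = q • O.toIntSubmodule ∧
      connectingIdeal O' O * connectingIdeal O O' = q • O'.toIntSubmodule := by
  obtain ⟨q, hq0, hq⟩ :=
    exists_span_nrd_image_eq (hO.1.fg_connectingIdeal hO'.1) (one_mem_connectingIdeal O O')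
  have hconj := hO.1.conj_connectingIdeal hO'.1
  refine ⟨q, hq0, ?_, ?_⟩
  · rw [← hconj]
    exact hO.mul_conj_eq_smul (toIntSubmodule_mul_connectingIdeal O O').le hq0 hq
  · have h := hO'.mul_conj_eq_smul (hconj ▸ (toIntSubmodule_mul_connectingIdeal O' O).le) hq0
      (by rw [nrd_image_conj, hq])
    rwa [conj_conj, hconj] at h

end connectingIdeal

theorem idealEquiv_iff_eq_op_smul {I K : Submodule ℤ ℍ[ℚ, a, b]} :
    IdealEquiv I K ↔ ∃ γ : ℍ[ℚ, a, b], γ ≠ 0 ∧ I = MulOpposite.op γ • K := by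
  simp only [IdealEquiv, ← SetLike.coe_set_eq, coe_pointwise_smul, ← Set.image_smul,
    MulOpposite.smul_eq_mul_unop, MulOpposite.unop_op]

theorem IdealEquiv.mul_left {I K : Submodule ℤ ℍ[ℚ, a, b]} (X : Submodule ℤ ℍ[ℚ, a, b])
    (h : IdealEquiv I K) : IdealEquiv (X * I) (X * K) := by
  obtain ⟨γ, hγ, rfl⟩ := idealEquiv_iff_eq_op_smul.1 h
  exact idealEquiv_iff_eq_op_smul.2 ⟨γ, hγ, mul_smul_comm _ _ _⟩

theorem idealEquiv_smul {q : ℚ} (hq : q ≠ 0) (I : Submodule ℤ ℍ[ℚ, a, b]) :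
    IdealEquiv (q • I) I := by
  refine ⟨q, (map_ne_zero (algebraMap ℚ ℍ[ℚ, a, b])).2 hq, ?_⟩
  rw [coe_pointwise_smul, ← Set.image_smul]
  exact Set.image_congr fun y _ => by rw [← coe_mul_eq_smul, coe_commutes]

namespace IsLeftIdeal

variable {O : Subring ℍ[ℚ, a, b]} {I : Submodule ℤ ℍ[ℚ, a, b]}

theorem toIntSubmodule_mul (hI : IsLeftIdeal O I) : O.toIntSubmodule * I = I :=
  le_antisymm (mul_le.2 hI.2.2) (le_mul_of_one_le_left' (one_le.2 (one_mem O)))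

theorem connectingIdeal_mul {O' : Subring ℍ[ℚ, a, b]} (hO' : IsOrder O') (hO : IsOrder O)
    (hI : IsLeftIdeal O I) : IsLeftIdeal O' (connectingIdeal O' O * I) := by
  have hIJ : I ≤ connectingIdeal O' O * I :=
    le_mul_of_one_le_left' (one_le.2 (one_mem_connectingIdeal O' O))
  refine ⟨(hO'.fg_connectingIdeal hO).mul hI.1, top_le_iff.1 (hI.2.1 ▸ span_mono hIJ),
    fun o ho x hx => ?_⟩
  rw [← toIntSubmodule_mul_connectingIdeal, mul_assoc]
  exact mul_mem_mul ho hx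

theorem idealEquiv_mul_mul {X Y : Submodule ℤ ℍ[ℚ, a, b]} {q : ℚ} (hq : q ≠ 0)
    (hXY : X * Y = q • O.toIntSubmodule) (hI : IsLeftIdeal O I) :
    IdealEquiv (X * (Y * I)) I := by
  rw [← mul_assoc, hXY, smul_mul_assoc, hI.toIntSubmodule_mul]
  exact idealEquiv_smul hq I

end IsLeftIdeal

end Quaternion

theorem class_number_independent_of_maximal_order_general (a b : ℚ)
    (O O' : Subring ℍ[ℚ, a, b]) (hO : IsMaximalOrder O) (hO' : IsMaximalOrder O') :
    Nonempty
      ((Quot fun I J : {I : Submodule ℤ ℍ[ℚ, a, b] // IsLeftIdeal O I} =>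
          IdealEquiv I.1 J.1) ≃
        Quot fun I J : {I : Submodule ℤ ℍ[ℚ, a, b] // IsLeftIdeal O' I} =>
          IdealEquiv I.1 J.1) := by
  obtain ⟨q, hq, hOO', hO'O⟩ := hO.exists_connectingIdeal_mul_eq_smul hO'
  exact ⟨Quot.equivOfInverseRel
    (fun I => ⟨connectingIdeal O' O * I.1, I.2.connectingIdeal_mul hO'.1 hO.1⟩)
    (fun K => ⟨connectingIdeal O O' * K.1, K.2.connectingIdeal_mul hO.1 hO'.1⟩)
    (fun _ _ => .mul_left _) (fun _ _ => .mul_left _)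
    (fun I => I.2.idealEquiv_mul_mul hq hOO') (fun K => K.2.idealEquiv_mul_mul hq hO'O)⟩

/-- **Brandt: the class number is an invariant of the algebra.** For any two maximal
orders `O`, `O'` of `A = ℍ[ℚ, a, b]`, the sets of equivalence classes of left
`O`-ideals and of left `O'`-ideals are in bijection; in particular all maximal orders
have the same class number `h(A)`. -/
theorem class_number_independent_of_maximal_order (a b : ℚ) (ha : a ≠ 0) (hb : b ≠ 0)
    (O O' : Subring ℍ[ℚ, a, b]) (hO : IsMaximalOrder O) (hO' : IsMaximalOrder O') :
    Nonempty
      ((Quot fun I J : {I : Submodule ℤ ℍ[ℚ, a, b] // IsLeftIdeal O I} =>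
          IdealEquiv I.1 J.1) ≃
        Quot fun I J : {I : Submodule ℤ ℍ[ℚ, a, b] // IsLeftIdeal O' I} =>
          IdealEquiv I.1 J.1) :=
  class_number_independent_of_maximal_order_general a b O O' hO hO'
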